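/- For all elements a, b, c, d, e of a commutative ring, e² · P₅(a,b,c,d,e) = (e² − ae − be − ce − de − 2 + abcde²)² − 4(ae+1)(be+1)(ce+1)(de+1). -/
import Mathlib


/-- The regular Diophantine quintuple polynomial. -/
def P5 {R : Type*} [CommRing R] (a b c d e : R) : R :=
  (a*b*c*d*e)^2 - 2*(a*b*c*d*e)*(a+b+c+d+e) + a^2 + b^2 + c^2 + d^2 + e^2
    - 4*(a*b*c*d + a*b*c*e + a*b*d*e + a*c*d*e + b*c*d*e)
    - 2*(a*b + a*c + a*d + a*e + b*c + b*d + b*e + c*d + c*e + d*e) - 4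

theorem P5_identity_eight {R : Type*} [CommRing R] (a b c d e : R) :
    e^2 * P5 a b c d e =
      (e^2 - a*e - b*e - c*e - d*e - 2 + a*b*c*d*e^2)^2
        - 4*(a*e+1)*(b*e+1)*(c*e+1)*(d*e+1) := by
  unfold P5; ring
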